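/- Let p ∈ ℝ[x₁,…,xₙ] be homogeneous of degree d ≥ 1 and hyperbolic with respect to e ∈ ℝⁿ, and let x ∈ ℝⁿ. If every real root λ of the univariate polynomial λ ↦ p(x + λe) satisfies λ ≤ 0, then every real root λ of λ ↦ (D_e p)(x + λe) also satisfies λ ≤ 0. (In other words, the hyperbolicity cone of p is contained in the derivative cone: Λ₊(p, e) ⊆ Λ₊(D_e p, e), so the derivative cone is a relaxation of the original cone.) -/

import Mathlib

open Polynomial

/-- The restriction of a multivariate polynomial `p` to the line `λ ↦ x + λ e`,
as a univariate polynomial in `λ`. -/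
noncomputable def lineRestrict {n : ℕ} (p : MvPolynomial (Fin n) ℝ)
    (x e : Fin n → ℝ) : Polynomial ℝ :=
  MvPolynomial.aeval (fun i => Polynomial.C (x i) + Polynomial.C (e i) * Polynomial.X) p

/-! The restriction `f(λ) = p(x + λe)` has `λ^d`-coefficient `p(e) ≠ 0` by homogeneity, and the
chain rule gives `(D_e p)(x + λe) = f'(λ)`. Hyperbolicity makes every complex root of `f` real, so
`f` splits over `ℝ`, with all roots `≤ 0` by assumption. For `t > 0` the formula
`f'(t) = lc(f) · ∑_a ∏_{b ≠ a} (t - b)` (over the roots with multiplicity) is then a nonempty sum of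
positive products times `lc(f) ≠ 0`, so `f'` has no positive root. -/

namespace Polynomial

theorem coeff_prod_sum_of_natDegree_le {R ι : Type*} [CommSemiring R] (s : Finset ι)
    (g : ι → R[X]) (m : ι → ℕ) (h : ∀ i ∈ s, (g i).natDegree ≤ m i) :
    (∏ i ∈ s, g i).coeff (∑ i ∈ s, m i) = ∏ i ∈ s, (g i).coeff (m i) := by
  classical
  induction s using Finset.cons_induction with
  | empty => simp
  | cons a s _ ih =>
    have hs : ∀ i ∈ s, (g i).natDegree ≤ m i := fun i hi => h i (Finset.mem_cons_of_mem hi)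
    rw [Finset.prod_cons, Finset.sum_cons, Finset.prod_cons,
      coeff_mul_add_eq_of_natDegree_le (h a (Finset.mem_cons_self a s))
        ((natDegree_prod_le s g).trans (Finset.sum_le_sum hs)), ih hs]

theorem Splits.eval_derivative_ne_zero_of_roots_lt {R : Type*} [Field R] [LinearOrder R]
    [IsStrictOrderedRing R] {f : R[X]} (hf : f.Splits) (hdeg : 0 < f.natDegree) {t : R}
    (ht : ∀ r ∈ f.roots, r < t) : (derivative f).eval t ≠ 0 := by
  classical
  have hf0 : f ≠ 0 := ne_zero_of_natDegree_gt hdeg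
  have hroots : f.roots ≠ 0 := by
    rw [← Multiset.card_pos, ← hf.natDegree_eq_card_roots]; exact hdeg
  have hterm : ∀ a ∈ f.roots, 0 < ((f.roots.erase a).map (t - ·)).prod := fun a _ =>
    Multiset.prod_pos fun b hb => by
      obtain ⟨r, hr, rfl⟩ := Multiset.mem_map.mp hb
      exact sub_pos.mpr (ht r (Multiset.mem_of_mem_erase hr))
  have hsum := Multiset.sum_lt_sum_of_nonempty hroots (f := fun _ => (0 : R)) hterm
  rw [hf.eval_derivative]
  simp only [Multiset.map_const', Multiset.sum_replicate, smul_zero] at hsum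
  exact mul_ne_zero (leadingCoeff_ne_zero.mpr hf0) hsum.ne'

theorem splits_of_forall_aeval_eq_zero_im_eq_zero {f : ℝ[X]}
    (h : ∀ z : ℂ, aeval z f = 0 → z.im = 0) : f.Splits := by
  refine Splits.of_splits_map_of_injective (algebraMap ℝ ℂ).injective (IsAlgClosed.splits _)
    fun z hz => ⟨z.re, ?_⟩
  have hz0 : aeval z f = 0 := by
    rw [aeval_def, ← eval_map]; exact isRoot_of_mem_roots hz
  exact Complex.ext (by simp) (by simp [h z hz0])

end Polynomial

namespace MvPolynomial

theorem derivative_aeval {σ R : Type*} [Fintype σ] [CommSemiring R] (g : σ → R[X])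
    (p : MvPolynomial σ R) :
    derivative (aeval g p) = ∑ i, aeval g (pderiv i p) * derivative (g i) := by
  classical
  induction p using MvPolynomial.induction_on with
  | C a => simp
  | add p q hp hq => simp only [map_add, hp, hq, add_mul, Finset.sum_add_distrib]
  | mul_X p i hp =>
    simp only [map_mul, aeval_X, derivative_mul, hp, Derivation.leibniz, pderiv_X, smul_eq_mul,
      map_add, add_mul, Finset.sum_add_distrib, Finset.sum_mul, Pi.single_apply, mul_ite, mul_one,
      mul_zero, apply_ite (aeval g), map_zero, ite_mul, zero_mul, Finset.sum_ite_eq,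
      Finset.mem_univ, if_true]
    rw [add_comm]
    exact congrArg _ (Finset.sum_congr rfl fun _ _ => by ring)

theorem IsHomogeneous.coeff_aeval {σ R : Type*} [CommSemiring R] {p : MvPolynomial σ R} {d : ℕ}
    (hp : p.IsHomogeneous d) (g : σ → R[X]) (hg : ∀ i, (g i).natDegree ≤ 1) :
    (MvPolynomial.aeval g p).coeff d = eval (fun i => (g i).coeff 1) p := by
  conv_lhs => rw [p.as_sum]
  conv_rhs => rw [p.as_sum]
  simp only [map_sum, finsetSum_coeff]
  refine Finset.sum_congr rfl fun α hα => ?_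
  have hdeg : ∑ i ∈ α.support, α i = d := by
    simpa [Finsupp.weight_apply, Finsupp.sum] using hp (mem_support_iff.mp hα)
  rw [aeval_monomial, eval_monomial, Polynomial.algebraMap_apply, Algebra.algebraMap_self,
    RingHom.id_apply, Polynomial.coeff_C_mul, ← hdeg, Finsupp.prod,
    coeff_prod_sum_of_natDegree_le, Finsupp.prod]
  · refine congrArg _ (Finset.prod_congr rfl fun i _ => ?_)
    simpa using coeff_pow_of_natDegree_le (m := α i) (hg i)
  · exact fun i _ => natDegree_pow_le_of_le _ (hg i) |>.trans (mul_one _).le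

end MvPolynomial

section lineRestrict

variable {n : ℕ}

theorem lineRestrict_sum_smul_pderiv (p : MvPolynomial (Fin n) ℝ) (x e : Fin n → ℝ) :
    lineRestrict (∑ j, e j • MvPolynomial.pderiv j p) x e = derivative (lineRestrict p x e) := by
  simp only [lineRestrict, MvPolynomial.derivative_aeval, map_sum, map_smul, derivative_add,
    derivative_C, derivative_C_mul_X, zero_add, smul_eq_C_mul]
  exact Finset.sum_congr rfl fun _ _ => mul_comm _ _

theorem coeff_lineRestrict_of_isHomogeneous {p : MvPolynomial (Fin n) ℝ} {d : ℕ}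
    (hp : p.IsHomogeneous d) (x e : Fin n → ℝ) :
    (lineRestrict p x e).coeff d = MvPolynomial.eval e p := by
  rw [lineRestrict, hp.coeff_aeval _ fun i => by compute_degree]
  simp

end lineRestrict

/-- The hyperbolicity cone of a hyperbolic polynomial `p` is contained in the
hyperbolicity cone of its directional derivative `D_e p`: if every real root of
`λ ↦ p(x + λe)` is nonpositive, then so is every real root of
`λ ↦ (D_e p)(x + λe)`. -/
theorem stmt5 {n : ℕ} (p : MvPolynomial (Fin n) ℝ) (d : ℕ) (hd : 1 ≤ d)
    (hhom : p.IsHomogeneous d) (e : Fin n → ℝ)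
    (hpos : 0 < MvPolynomial.eval e p)
    (hreal : ∀ q : Fin n → ℝ, ∀ z : ℂ,
      Polynomial.aeval z (lineRestrict p q e) = 0 → z.im = 0)
    (x : Fin n → ℝ)
    (hx : ∀ t : ℝ, Polynomial.eval t (lineRestrict p x e) = 0 → t ≤ 0) :
    ∀ t : ℝ,
      Polynomial.eval t (lineRestrict (∑ j, e j • MvPolynomial.pderiv j p) x e) = 0 →
        t ≤ 0 := by
  intro t ht
  by_contra! ht_pos
  have hdeg : 0 < (lineRestrict p x e).natDegree := by
    refine hd.trans (le_natDegree_of_ne_zero ?_)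
    rw [coeff_lineRestrict_of_isHomogeneous hhom]
    exact hpos.ne'
  have hroots : ∀ r ∈ (lineRestrict p x e).roots, r < t := fun r hr =>
    (hx r (isRoot_of_mem_roots hr)).trans_lt ht_pos
  rw [lineRestrict_sum_smul_pderiv] at ht
  exact (splits_of_forall_aeval_eq_zero_im_eq_zero (hreal x)).eval_derivative_ne_zero_of_roots_lt
    hdeg hroots ht
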